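/- arXiv:1203.5455 — 2 statements merged into one kernel-verified Lean document; each statement's English description precedes it below -/
import Mathlib

section
/- Let n ≥ 1 and let σ be a permutation of {1,…,2n}. There is a unique integer matrix (φ_{ℓk})_{1≤ℓ,k≤n} such that T_k(z) = Σ_{ℓ=1}^{n} φ_{ℓk}·z_ℓ for all z ∈ ℂⁿ and all 1 ≤ k ≤ n; moreover this matrix is antisymmetric (φ_{ℓk} = −φ_{kℓ}, in particular φ_{kk} = 0) and all its entries satisfy |φ_{ℓk}| ≤ 1. -/
open Finset

/-- The vertex map `A_ℓ(z) := Σ_{j=1}^{ℓ−1} ε(σ(j))·z_{k(σ(j))}` (0-based indexing of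
`Fin (2*n)`: the 1-based index `j` corresponds to `j' : Fin (2*n)` with `j = j'+1`). -/
noncomputable def Avert (n : ℕ) (σ : Equiv.Perm (Fin (2 * n))) (z : Fin n → ℂ) (ℓ : ℕ) : ℂ :=
  ∑ j ∈ Finset.univ.filter (fun j : Fin (2 * n) => (j : ℕ) + 1 < ℓ),
    (-1 : ℂ) ^ ((σ j : ℕ)) * z ⟨(σ j : ℕ) / 2, by have := (σ j).isLt; omega⟩

/-- `T_k(z) := A_{τ(2k)+1}(z) − A_{τ(2k−1)}(z)` where `τ = σ⁻¹`, written 0-based: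
the 1-based index `2k−1` (resp. `2k`) corresponds to `2k' : Fin (2*n)`
(resp. `2k'+1`), where `k' = k−1 : Fin n`, and the 1-based value
`τ(j) = (σ.symm j')+1`. -/
noncomputable def Tmap (n : ℕ) (σ : Equiv.Perm (Fin (2 * n))) (z : Fin n → ℂ)
    (k : Fin n) : ℂ :=
  Avert n σ z (((σ.symm ⟨2 * (k : ℕ) + 1, by have := k.isLt; omega⟩ : Fin (2 * n)) : ℕ) + 2) -
    Avert n σ z (((σ.symm ⟨2 * (k : ℕ), by have := k.isLt; omega⟩ : Fin (2 * n)) : ℕ) + 1)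

def aIdx (n : ℕ) (σ : Equiv.Perm (Fin (2 * n))) (k : Fin n) : ℕ :=
  ((σ.symm ⟨2 * (k : ℕ) + 1, by have := k.isLt; omega⟩ : Fin (2 * n)) : ℕ)

def bIdx (n : ℕ) (σ : Equiv.Perm (Fin (2 * n))) (k : Fin n) : ℕ :=
  ((σ.symm ⟨2 * (k : ℕ), by have := k.isLt; omega⟩ : Fin (2 * n)) : ℕ)

lemma sum_fin_double {M : Type*} [AddCommMonoid M] (n : ℕ) (f : Fin (2 * n) → M) :
    ∑ i, f i = ∑ ℓ : Fin n,
      (f ⟨2 * (ℓ : ℕ), by have := ℓ.isLt; omega⟩ +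
       f ⟨2 * (ℓ : ℕ) + 1, by have := ℓ.isLt; omega⟩) := by
  rw [← Equiv.sum_comp ((finProdFinEquiv (m := n) (n := 2)).trans (finCongr (by ring))) f]
  rw [Fintype.sum_prod_type]
  refine Finset.sum_congr rfl fun ℓ _ => ?_
  rw [Fin.sum_univ_two]
  congr 1 <;> · congr 1; ext; simp [finProdFinEquiv]; try omega

lemma Avert_eq (n : ℕ) (σ : Equiv.Perm (Fin (2 * n))) (z : Fin n → ℂ) (m : ℕ) :
    Avert n σ z m = ∑ ℓ : Fin n,
      (((if bIdx n σ ℓ + 1 < m then (1 : ℂ) else 0) -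
        (if aIdx n σ ℓ + 1 < m then (1 : ℂ) else 0)) * z ℓ) := by
  unfold Avert
  rw [Finset.sum_filter]
  have key : ∀ a : Fin (2 * n),
      (if ((a : ℕ) + 1 < m) then
        (-1 : ℂ) ^ ((σ a : ℕ)) * z ⟨(σ a : ℕ) / 2, by have := (σ a).isLt; omega⟩ else 0) =
      (fun i : Fin (2 * n) =>
        if ((σ.symm i : ℕ) + 1 < m) then
          (-1 : ℂ) ^ (i : ℕ) * z ⟨(i : ℕ) / 2, by have := i.isLt; omega⟩ else 0) (σ a) := by
    intro a; simp
  rw [Finset.sum_congr rfl (fun a _ => key a),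
    Equiv.sum_comp σ (fun i : Fin (2 * n) =>
      if ((σ.symm i : ℕ) + 1 < m) then
        (-1 : ℂ) ^ (i : ℕ) * z ⟨(i : ℕ) / 2, by have := i.isLt; omega⟩ else 0)]
  · rw [sum_fin_double n]
    refine Finset.sum_congr rfl fun ℓ _ => ?_
    simp only [aIdx, bIdx]
    have h1 : (2 * (ℓ : ℕ)) / 2 = (ℓ : ℕ) := by omega
    have h2 : (2 * (ℓ : ℕ) + 1) / 2 = (ℓ : ℕ) := by omega
    by_cases hA : ((σ.symm ⟨2 * (ℓ : ℕ), by omega⟩ : Fin (2*n)) : ℕ) + 1 < m <;> by_cases hB : ((σ.symm ⟨2 * (ℓ : ℕ)+1, by omega⟩ : Fin (2*n)) : ℕ) + 1 < m <;> simp only [hA, hB, h1, h2, if_true, if_false, pow_succ, pow_mul] <;> simp <;> ring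

def phi0 (n : ℕ) (σ : Equiv.Perm (Fin (2 * n))) : Matrix (Fin n) (Fin n) ℤ :=
  fun ℓ k =>
    ((if bIdx n σ ℓ ≤ aIdx n σ k then (1 : ℤ) else 0) -
     (if aIdx n σ ℓ ≤ aIdx n σ k then (1 : ℤ) else 0)) -
    ((if bIdx n σ ℓ < bIdx n σ k then (1 : ℤ) else 0) -
     (if aIdx n σ ℓ < bIdx n σ k then (1 : ℤ) else 0))

lemma Tmap_eq (n : ℕ) (σ : Equiv.Perm (Fin (2 * n))) (z : Fin n → ℂ) (k : Fin n) :
    Tmap n σ z k = ∑ ℓ : Fin n, (phi0 n σ ℓ k : ℂ) * z ℓ := by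
  unfold Tmap
  rw [Avert_eq, Avert_eq, ← Finset.sum_sub_distrib]
  refine Finset.sum_congr rfl fun ℓ _ => ?_
  have hb : bIdx n σ ℓ + 1 < aIdx n σ k + 2 ↔ bIdx n σ ℓ ≤ aIdx n σ k := by omega
  have ha : aIdx n σ ℓ + 1 < aIdx n σ k + 2 ↔ aIdx n σ ℓ ≤ aIdx n σ k := by omega
  have hb' : bIdx n σ ℓ + 1 < bIdx n σ k + 1 ↔ bIdx n σ ℓ < bIdx n σ k := by omega
  have ha' : aIdx n σ ℓ + 1 < bIdx n σ k + 1 ↔ aIdx n σ ℓ < bIdx n σ k := by omega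
  show ((if bIdx n σ ℓ + 1 < aIdx n σ k + 2 then (1:ℂ) else 0) -
        (if aIdx n σ ℓ + 1 < aIdx n σ k + 2 then (1:ℂ) else 0)) * z ℓ -
       ((if bIdx n σ ℓ + 1 < bIdx n σ k + 1 then (1:ℂ) else 0) -
        (if aIdx n σ ℓ + 1 < bIdx n σ k + 1 then (1:ℂ) else 0)) * z ℓ
      = (phi0 n σ ℓ k : ℂ) * z ℓ
  unfold phi0
  simp only [hb, ha, hb', ha']
  split_ifs <;> push_cast <;> ring

lemma idx_ne (n : ℕ) (σ : Equiv.Perm (Fin (2 * n))) {i j : Fin (2 * n)}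
    (h : (i : ℕ) ≠ (j : ℕ)) : ((σ.symm i : Fin (2 * n)) : ℕ) ≠ ((σ.symm j : Fin (2 * n)) : ℕ) := by
  intro hc
  exact h (congrArg Fin.val (σ.symm.injective (Fin.ext hc)))

/-- There is a unique integer matrix `(φ_{ℓk})` with `T_k(z) = Σ_ℓ φ_{ℓk}·z_ℓ`;
moreover this matrix is antisymmetric and all its entries have absolute value at most 1. -/
theorem exists_unique_intersection_matrix (n : ℕ) (hn : 1 ≤ n)
    (σ : Equiv.Perm (Fin (2 * n))) :
    (∃! φ : Matrix (Fin n) (Fin n) ℤ, ∀ (z : Fin n → ℂ) (k : Fin n),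
        Tmap n σ z k = ∑ ℓ : Fin n, (φ ℓ k : ℂ) * z ℓ) ∧
    ∀ φ : Matrix (Fin n) (Fin n) ℤ,
      (∀ (z : Fin n → ℂ) (k : Fin n), Tmap n σ z k = ∑ ℓ : Fin n, (φ ℓ k : ℂ) * z ℓ) →
      ((∀ ℓ k : Fin n, φ ℓ k = - φ k ℓ) ∧ (∀ ℓ k : Fin n, |φ ℓ k| ≤ 1)) := by
  have huniq : ∀ φ : Matrix (Fin n) (Fin n) ℤ,
      (∀ (z : Fin n → ℂ) (k : Fin n), Tmap n σ z k = ∑ ℓ : Fin n, (φ ℓ k : ℂ) * z ℓ) →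
      φ = phi0 n σ := by
    intro φ hφ
    ext ℓ k
    have h1 := hφ (fun ℓ' => if ℓ' = ℓ then 1 else 0) k
    have h2 := Tmap_eq n σ (fun ℓ' => if ℓ' = ℓ then 1 else 0) k
    rw [h2] at h1
    simp only [mul_ite, mul_one, mul_zero] at h1
    rw [Finset.sum_ite_eq' univ ℓ, Finset.sum_ite_eq' univ ℓ] at h1
    simp only [Finset.mem_univ, if_true] at h1
    exact_mod_cast h1.symm
  -- distinctness facts
  have key : ∀ ℓ k : Fin n, ℓ ≠ k →
      aIdx n σ ℓ ≠ aIdx n σ k ∧ aIdx n σ ℓ ≠ bIdx n σ k ∧ bIdx n σ ℓ ≠ aIdx n σ k ∧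
      bIdx n σ ℓ ≠ bIdx n σ k := by
    intro ℓ k h
    have hv : (ℓ : ℕ) ≠ (k : ℕ) := fun hc => h (Fin.ext hc)
    refine ⟨idx_ne n σ ?_, idx_ne n σ ?_, idx_ne n σ ?_, idx_ne n σ ?_⟩ <;> simp <;> omega
  have hab : ∀ k : Fin n, aIdx n σ k ≠ bIdx n σ k := by
    intro k; refine idx_ne n σ ?_; simp
  have hanti : ∀ ℓ k : Fin n, phi0 n σ ℓ k = - phi0 n σ k ℓ := by
    intro ℓ k
    by_cases h : ℓ = k
    · subst h
      have := hab ℓ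
      unfold phi0; split_ifs <;> omega
    · obtain ⟨h1, h2, h3, h4⟩ := key ℓ k h
      have := hab ℓ; have := hab k
      unfold phi0; split_ifs <;> omega
  have hbound : ∀ ℓ k : Fin n, |phi0 n σ ℓ k| ≤ 1 := by
    intro ℓ k
    rw [abs_le]
    by_cases h : ℓ = k
    · subst h
      have := hab ℓ
      unfold phi0; split_ifs <;> omega
    · obtain ⟨h1, h2, h3, h4⟩ := key ℓ k h
      have := hab ℓ; have := hab k
      unfold phi0; split_ifs <;> omega
  refine ⟨⟨phi0 n σ, Tmap_eq n σ, huniq⟩, fun φ hφ => ?_⟩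
  rw [huniq φ hφ]
  exact ⟨hanti, hbound⟩
end

section
/- Let n ≥ 1, let σ be a permutation of {1,…,2n}, let (φ_{ℓk}) be the unique integer matrix with T_k(z) = Σ_{ℓ=1}^{n} φ_{ℓk}·z_ℓ for all z ∈ ℂⁿ, and let s be the number of equivalence classes of the vertex-identification relation ∼. Then the rank of the matrix (φ_{ℓk}) over ℚ equals n + 1 − s. (In the paper this is the statement rank(i*p*) = rank(p*) = 2g, where g = (n+1−s)/2 is the genus of the glued surface.) -/
open Finset

/-- The vertex-identification relation on `ZMod (2n)`: for each `k` (0-based `k' : Fin n`),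
`τ(2k−1) ∼ τ(2k)+1` and `τ(2k−1)+1 ∼ τ(2k)`. -/
def vertRel (n : ℕ) (σ : Equiv.Perm (Fin (2 * n))) (x y : ZMod (2 * n)) : Prop :=
  ∃ k : Fin n,
    (x = (((σ.symm ⟨2 * (k : ℕ), by have := k.isLt; omega⟩ : Fin (2 * n)) : ℕ)
            : ZMod (2 * n)) + 1 ∧
     y = (((σ.symm ⟨2 * (k : ℕ) + 1, by have := k.isLt; omega⟩ : Fin (2 * n)) : ℕ)
            : ZMod (2 * n)) + 2) ∨
    (x = (((σ.symm ⟨2 * (k : ℕ), by have := k.isLt; omega⟩ : Fin (2 * n)) : ℕ)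
            : ZMod (2 * n)) + 2 ∧
     y = (((σ.symm ⟨2 * (k : ℕ) + 1, by have := k.isLt; omega⟩ : Fin (2 * n)) : ℕ)
            : ZMod (2 * n)) + 1)

namespace RankAux

variable (n : ℕ) (σ : Equiv.Perm (Fin (2 * n)))

/-- Rational prefix sums: `Cq v m = Σ_{j < m} ε(σ j) v_{⌊σ j/2⌋}`. -/
def Cq (v : Fin n → ℚ) (m : ℕ) : ℚ :=
  ∑ j ∈ Finset.univ.filter (fun j : Fin (2 * n) => (j : ℕ) < m),
    (-1 : ℚ) ^ ((σ j : ℕ)) * v ⟨(σ j : ℕ) / 2, by have := (σ j).isLt; omega⟩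

/-- `τ(2k)` as a natural number. -/
def tA (k : Fin n) : ℕ :=
  ((σ.symm ⟨2 * (k : ℕ), by have := k.isLt; omega⟩ : Fin (2 * n)) : ℕ)

/-- `τ(2k+1)` as a natural number. -/
def tB (k : Fin n) : ℕ :=
  ((σ.symm ⟨2 * (k : ℕ) + 1, by have := k.isLt; omega⟩ : Fin (2 * n)) : ℕ)

lemma tA_lt (k : Fin n) : tA n σ k < 2 * n := Fin.isLt _

lemma tB_lt (k : Fin n) : tB n σ k < 2 * n := Fin.isLt _

lemma Cq_zero (v : Fin n → ℚ) : Cq n σ v 0 = 0 := by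
  unfold Cq
  rw [Finset.filter_false_of_mem (fun j _ => by omega)]
  simp

lemma Cq_succ (v : Fin n → ℚ) (m : ℕ) (hm : m < 2 * n) :
    Cq n σ v (m + 1) = Cq n σ v m +
      (-1 : ℚ) ^ ((σ ⟨m, hm⟩ : ℕ)) *
        v ⟨(σ ⟨m, hm⟩ : ℕ) / 2, by have := (σ ⟨m, hm⟩).isLt; omega⟩ := by
  unfold Cq
  have hfe : Finset.univ.filter (fun j : Fin (2 * n) => (j : ℕ) < m + 1)
      = insert ⟨m, hm⟩ (Finset.univ.filter (fun j : Fin (2 * n) => (j : ℕ) < m)) := by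
    ext j
    simp [Fin.ext_iff]
    omega
  rw [hfe, Finset.sum_insert (by simp)]
  ring

lemma Cq_add (v w : Fin n → ℚ) (m : ℕ) :
    Cq n σ (v + w) m = Cq n σ v m + Cq n σ w m := by
  unfold Cq
  rw [← Finset.sum_add_distrib]
  exact Finset.sum_congr rfl fun j _ => by simp [mul_add]

lemma Cq_smul (a : ℚ) (v : Fin n → ℚ) (m : ℕ) :
    Cq n σ (a • v) m = a * Cq n σ v m := by
  unfold Cq
  rw [Finset.mul_sum]
  exact Finset.sum_congr rfl fun j _ => by simp; ring

lemma sum_pair_zero (g : ℕ → ℚ) (h : ∀ m, g (2 * m) + g (2 * m + 1) = 0) (m : ℕ) :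
    ∑ i ∈ Finset.range (2 * m), g i = 0 := by
  induction m with
  | zero => simp
  | succ m ih =>
    have h2 : 2 * (m + 1) = 2 * m + 1 + 1 := by ring
    rw [h2, Finset.sum_range_succ, Finset.sum_range_succ, ih]
    have := h m
    linarith

lemma Cq_total (v : Fin n → ℚ) : Cq n σ v (2 * n) = 0 := by
  classical
  unfold Cq
  rw [Finset.filter_true_of_mem (fun j _ => j.isLt)]
  have h2 : ∑ j : Fin (2 * n),
      (-1 : ℚ) ^ ((σ j : ℕ)) * v ⟨(σ j : ℕ) / 2, by have := (σ j).isLt; omega⟩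
      = ∑ i : Fin (2 * n), (-1 : ℚ) ^ ((i : ℕ)) * v ⟨(i : ℕ) / 2, by have := i.isLt; omega⟩ :=
    Equiv.sum_comp σ (fun i => (-1 : ℚ) ^ ((i : ℕ)) * v ⟨(i : ℕ) / 2, by have := i.isLt; omega⟩)
  rw [h2]
  set g : ℕ → ℚ := fun i => (-1 : ℚ) ^ i * (if h : i < 2 * n then v ⟨i / 2, by omega⟩ else 0)
    with hg
  have h3 : ∀ i : Fin (2 * n),
      (-1 : ℚ) ^ ((i : ℕ)) * v ⟨(i : ℕ) / 2, by have := i.isLt; omega⟩ = g (i : ℕ) := by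
    intro i
    simp [hg, i.isLt]
  rw [Finset.sum_congr rfl (fun i _ => h3 i), Fin.sum_univ_eq_sum_range g (2 * n)]
  apply sum_pair_zero
  intro m
  by_cases hm : 2 * m < 2 * n
  · have hm1 : 2 * m + 1 < 2 * n := by omega
    have e1 : (2 * m) / 2 = m := by omega
    have e2 : (2 * m + 1) / 2 = m := by omega
    simp only [hg, dif_pos hm, dif_pos hm1, e1, e2]
    have p1 : (-1 : ℚ) ^ (2 * m) = 1 := by
      rw [pow_mul]; norm_num
    have p2 : (-1 : ℚ) ^ (2 * m + 1) = -1 := by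
      rw [pow_succ, pow_mul]; norm_num
    rw [p1, p2]
    ring
  · have hm1 : ¬ (2 * m + 1 < 2 * n) := by omega
    simp only [hg, dif_neg hm, dif_neg hm1]
    ring

lemma Avert_cast (v : Fin n → ℚ) (m : ℕ) :
    Avert n σ (fun ℓ => (v ℓ : ℂ)) (m + 1) = ((Cq n σ v m : ℚ) : ℂ) := by
  unfold Avert Cq
  have hfe : Finset.univ.filter (fun j : Fin (2 * n) => (j : ℕ) + 1 < m + 1)
      = Finset.univ.filter (fun j : Fin (2 * n) => (j : ℕ) < m) := by
    ext j; simp only [Finset.mem_filter, Finset.mem_univ, true_and]; omega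
  rw [hfe]
  push_cast
  rfl

variable {n σ} in
lemma Cq_tA_succ (v : Fin n → ℚ) (k : Fin n) :
    Cq n σ v (tA n σ k + 1) = Cq n σ v (tA n σ k) + v k := by
  have hσ : σ ⟨tA n σ k, tA_lt n σ k⟩ = ⟨2 * (k : ℕ), by have := k.isLt; omega⟩ := by
    show σ (σ.symm _) = _
    simp
  rw [Cq_succ n σ v (tA n σ k) (tA_lt n σ k)]
  congr 1
  simp only [hσ]
  have e1 : (-1 : ℚ) ^ (2 * (k : ℕ)) = 1 := by rw [pow_mul]; norm_num
  have e2 : (⟨(2 * (k : ℕ)) / 2, by have := k.isLt; omega⟩ : Fin n) = k := by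
    ext; simp
  simp only [e1, e2]  -- coercion (⟨2k, _⟩ : Fin (2n)).val = 2k
  rw [one_mul]

variable {n σ} in
lemma Cq_tB_succ (v : Fin n → ℚ) (k : Fin n) :
    Cq n σ v (tB n σ k + 1) = Cq n σ v (tB n σ k) - v k := by
  have hσ : σ ⟨tB n σ k, tB_lt n σ k⟩ = ⟨2 * (k : ℕ) + 1, by have := k.isLt; omega⟩ := by
    show σ (σ.symm _) = _
    simp
  rw [Cq_succ n σ v (tB n σ k) (tB_lt n σ k)]
  simp only [hσ]
  have e1 : (-1 : ℚ) ^ (2 * (k : ℕ) + 1) = -1 := by rw [pow_succ, pow_mul]; norm_num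
  have e2 : (⟨(2 * (k : ℕ) + 1) / 2, by have := k.isLt; omega⟩ : Fin n) = k := by
    ext; simp; omega
  simp only [e1, e2]
  ring

/-- The linear map `Φ : v ↦ (w ↦ c_{(w-1).val})`. -/
def PhiL : (Fin n → ℚ) →ₗ[ℚ] (ZMod (2 * n) → ℚ) where
  toFun v w := Cq n σ v ((w - 1).val)
  map_add' v w := by funext x; exact Cq_add n σ v w _
  map_smul' a v := by funext x; exact Cq_smul n σ a v _

/-- The linear map `G : f ↦ (ℓ ↦ f(τ(2ℓ)+2) − f(τ(2ℓ)+1))`. -/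
def Gq : (ZMod (2 * n) → ℚ) →ₗ[ℚ] (Fin n → ℚ) where
  toFun f ℓ := f (((tA n σ ℓ : ℕ) : ZMod (2 * n)) + 2) - f (((tA n σ ℓ : ℕ) : ZMod (2 * n)) + 1)
  map_add' f g := by funext ℓ; simp; ring
  map_smul' a f := by funext ℓ; simp; ring

variable {n σ} in
lemma PhiL_cast (hn : 1 ≤ n) (v : Fin n → ℚ) (m : ℕ) (hm : m ≤ 2 * n) :
    PhiL n σ v (((m : ℕ) : ZMod (2 * n)) + 1) = Cq n σ v m := by
  haveI : NeZero (2 * n) := ⟨by omega⟩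
  show Cq n σ v (((((m : ℕ) : ZMod (2 * n)) + 1) - 1).val) = Cq n σ v m
  rw [add_sub_cancel_right]
  rcases eq_or_lt_of_le hm with rfl | h
  · rw [ZMod.natCast_self]
    rw [ZMod.val_zero, Cq_zero, Cq_total]
  · rw [ZMod.val_cast_of_lt h]

variable {n σ} in
lemma vertRel_left (k : Fin n) :
    vertRel n σ (((tA n σ k : ℕ) : ZMod (2 * n)) + 1) (((tB n σ k : ℕ) : ZMod (2 * n)) + 2) :=
  ⟨k, Or.inl ⟨rfl, rfl⟩⟩

variable {n σ} in
lemma vertRel_right (k : Fin n) :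
    vertRel n σ (((tA n σ k : ℕ) : ZMod (2 * n)) + 2) (((tB n σ k : ℕ) : ZMod (2 * n)) + 1) :=
  ⟨k, Or.inr ⟨rfl, rfl⟩⟩

variable {n σ} in
lemma cast_succ_add_one (m : ℕ) :
    (((m + 1 : ℕ) : ZMod (2 * n)) + 1) = ((m : ℕ) : ZMod (2 * n)) + 2 := by
  push_cast
  ring

/-- The kernel condition. -/
def Kcond (v : Fin n → ℚ) : Prop :=
  ∀ k : Fin n, Cq n σ v (tB n σ k + 1) = Cq n σ v (tA n σ k)

variable {n σ} in
lemma PhiL_rel (hn : 1 ≤ n) (v : Fin n → ℚ) (hv : Kcond n σ v) :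
    ∀ x y, vertRel n σ x y → PhiL n σ v x = PhiL n σ v y := by
  rintro x y ⟨k, (⟨rfl, rfl⟩ | ⟨rfl, rfl⟩)⟩
  · -- Cq (tA k) = Cq (tB k + 1)
    show PhiL n σ v (((tA n σ k : ℕ) : ZMod (2 * n)) + 1)
        = PhiL n σ v (((tB n σ k : ℕ) : ZMod (2 * n)) + 2)
    rw [show (((tB n σ k : ℕ) : ZMod (2 * n)) + 2) = (((tB n σ k + 1 : ℕ) : ZMod (2 * n)) + 1)
        from (cast_succ_add_one _).symm]
    rw [PhiL_cast hn v (tA n σ k) (by have := tA_lt n σ k; omega),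
      PhiL_cast hn v (tB n σ k + 1) (by have := tB_lt n σ k; omega)]
    exact (hv k).symm
  · -- Cq (tA k + 1) = Cq (tB k)
    show PhiL n σ v (((tA n σ k : ℕ) : ZMod (2 * n)) + 2)
        = PhiL n σ v (((tB n σ k : ℕ) : ZMod (2 * n)) + 1)
    rw [show (((tA n σ k : ℕ) : ZMod (2 * n)) + 2) = (((tA n σ k + 1 : ℕ) : ZMod (2 * n)) + 1)
        from (cast_succ_add_one _).symm]
    rw [PhiL_cast hn v (tA n σ k + 1) (by have := tA_lt n σ k; omega),
      PhiL_cast hn v (tB n σ k) (by have := tB_lt n σ k; omega)]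
    rw [Cq_tA_succ v k, ← hv k, Cq_tB_succ v k]
    ring

variable {n σ} in
lemma PhiL_one (hn : 1 ≤ n) (v : Fin n → ℚ) : PhiL n σ v 1 = 0 := by
  have h := PhiL_cast (σ := σ) hn v 0 (by omega)
  simp only [Nat.cast_zero, zero_add] at h
  rw [h, Cq_zero]

variable {n σ} in
lemma GL_PhiL (hn : 1 ≤ n) (v : Fin n → ℚ) : Gq n σ (PhiL n σ v) = v := by
  funext ℓ
  show PhiL n σ v (((tA n σ ℓ : ℕ) : ZMod (2 * n)) + 2)
      - PhiL n σ v (((tA n σ ℓ : ℕ) : ZMod (2 * n)) + 1) = v ℓ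
  rw [show (((tA n σ ℓ : ℕ) : ZMod (2 * n)) + 2) = (((tA n σ ℓ + 1 : ℕ) : ZMod (2 * n)) + 1)
      from (cast_succ_add_one _).symm]
  rw [PhiL_cast hn v (tA n σ ℓ + 1) (by have := tA_lt n σ ℓ; omega),
    PhiL_cast hn v (tA n σ ℓ) (by have := tA_lt n σ ℓ; omega)]
  rw [Cq_tA_succ v ℓ]
  ring

variable {n σ} in
lemma Cq_GL (hn : 1 ≤ n) (f : ZMod (2 * n) → ℚ)
    (hrel : ∀ x y, vertRel n σ x y → f x = f y) (h1 : f 1 = 0) :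
    ∀ m, m ≤ 2 * n → Cq n σ (Gq n σ f) m = f (((m : ℕ) : ZMod (2 * n)) + 1) := by
  intro m
  induction m with
  | zero =>
    intro _
    rw [Cq_zero]
    simpa using h1.symm
  | succ m ih =>
    intro hm1
    have hm : m < 2 * n := by omega
    have ihm := ih (by omega)
    rw [Cq_succ n σ (Gq n σ f) m hm, ihm, cast_succ_add_one]
    set i := σ ⟨m, hm⟩ with hi
    rcases Nat.even_or_odd (i : ℕ) with ⟨l, hl⟩ | ⟨l, hl⟩
    · -- even: i = 2l, m = tA ⟨l⟩
      have hln : l < n := by have := i.isLt; omega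
      set k : Fin n := ⟨l, hln⟩ with hk
      have hieq : i = ⟨2 * (k : ℕ), by omega⟩ := by ext; simp [hk]; omega
      have htA : tA n σ k = m := by
        have : σ.symm i = ⟨m, hm⟩ := by rw [hi]; exact σ.symm_apply_apply _
        rw [hieq] at this
        show ((σ.symm _ : Fin (2 * n)) : ℕ) = m
        rw [this]
      have e1 : (-1 : ℚ) ^ ((i : ℕ)) = 1 := by
        rw [hieq]; show (-1 : ℚ) ^ (2 * (k : ℕ)) = 1; rw [pow_mul]; norm_num
      have e2 : (⟨(i : ℕ) / 2, by have := i.isLt; omega⟩ : Fin n) = k := by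
        ext; simp [hk]; omega
      rw [e1, e2, one_mul]
      show f _ + (f (((tA n σ k : ℕ) : ZMod (2 * n)) + 2)
          - f (((tA n σ k : ℕ) : ZMod (2 * n)) + 1)) = _
      rw [htA]
      ring
    · -- odd: i = 2l+1, m = tB ⟨l⟩
      have hln : l < n := by have := i.isLt; omega
      set k : Fin n := ⟨l, hln⟩ with hk
      have hieq : i = ⟨2 * (k : ℕ) + 1, by omega⟩ := by ext; simp [hk]; omega
      have htB : tB n σ k = m := by
        have : σ.symm i = ⟨m, hm⟩ := by rw [hi]; exact σ.symm_apply_apply _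
        rw [hieq] at this
        show ((σ.symm _ : Fin (2 * n)) : ℕ) = m
        rw [this]
      have e1 : (-1 : ℚ) ^ ((i : ℕ)) = -1 := by
        rw [hieq]; show (-1 : ℚ) ^ (2 * (k : ℕ) + 1) = -1
        rw [pow_succ, pow_mul]; norm_num
      have e2 : (⟨(i : ℕ) / 2, by have := i.isLt; omega⟩ : Fin n) = k := by
        ext; simp [hk]; omega
      rw [e1, e2]
      have r1 := hrel _ _ (vertRel_left (σ := σ) k)
      have r2 := hrel _ _ (vertRel_right (σ := σ) k)
      rw [htB] at r1 r2
      show f _ + (-1) * (f (((tA n σ k : ℕ) : ZMod (2 * n)) + 2)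
          - f (((tA n σ k : ℕ) : ZMod (2 * n)) + 1)) = _
      rw [r1, r2]
      ring

variable {n σ} in
lemma GL_mem (hn : 1 ≤ n) (f : ZMod (2 * n) → ℚ)
    (hrel : ∀ x y, vertRel n σ x y → f x = f y) (h1 : f 1 = 0) :
    Kcond n σ (Gq n σ f) := by
  intro k
  rw [Cq_GL hn f hrel h1 (tB n σ k + 1) (by have := tB_lt n σ k; omega),
    Cq_GL hn f hrel h1 (tA n σ k) (by have := tA_lt n σ k; omega)]
  rw [cast_succ_add_one]
  exact (hrel _ _ (vertRel_left (σ := σ) k)).symm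

variable {n σ} in
lemma PhiL_GL (hn : 1 ≤ n) (f : ZMod (2 * n) → ℚ)
    (hrel : ∀ x y, vertRel n σ x y → f x = f y) (h1 : f 1 = 0) :
    PhiL n σ (Gq n σ f) = f := by
  haveI : NeZero (2 * n) := ⟨by omega⟩
  funext w
  have hw : w = (((w - 1).val : ℕ) : ZMod (2 * n)) + 1 := by
    rw [ZMod.natCast_val, ZMod.cast_id]
    ring
  calc PhiL n σ (Gq n σ f) w
      = PhiL n σ (Gq n σ f) ((((w - 1).val : ℕ) : ZMod (2 * n)) + 1) := by rw [← hw]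
    _ = Cq n σ (Gq n σ f) ((w - 1).val) := PhiL_cast hn _ _ (le_of_lt (ZMod.val_lt _))
    _ = f ((((w - 1).val : ℕ) : ZMod (2 * n)) + 1) :=
        Cq_GL hn f hrel h1 _ (le_of_lt (ZMod.val_lt _))
    _ = f w := by rw [← hw]

end RankAux

open RankAux in
/-- If `(φ_{ℓk})` is the integer matrix with `T_k(z) = Σ_ℓ φ_{ℓk}·z_ℓ`, and `s` is the
number of equivalence classes of the vertex-identification relation, then the rank of
`(φ_{ℓk})` over `ℚ` equals `n + 1 − s`. -/
theorem rank_intersection_matrix (n : ℕ) (hn : 1 ≤ n) (σ : Equiv.Perm (Fin (2 * n)))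
    (φ : Matrix (Fin n) (Fin n) ℤ)
    (hφ : ∀ (z : Fin n → ℂ) (k : Fin n), Tmap n σ z k = ∑ ℓ : Fin n, (φ ℓ k : ℂ) * z ℓ)
    (s : ℕ) (hs : s = Nat.card (Quot (vertRel n σ))) :
    (φ.map (fun a => (a : ℚ))).rank = n + 1 - s := by
  classical
  haveI : NeZero (2 * n) := ⟨by omega⟩
  set A : Matrix (Fin n) (Fin n) ℚ := φ.map (fun a => (a : ℚ)) with hA
  -- The kernel of `A.transpose` is the set of `v` with `Kcond v`.
  have hK : ∀ v : Fin n → ℚ, A.transpose.mulVecLin v = 0 ↔ Kcond n σ v := by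
    intro v
    have hTm : ∀ k : Fin n,
        ((Cq n σ v (tB n σ k + 1) - Cq n σ v (tA n σ k) : ℚ) : ℂ)
          = ((∑ ℓ : Fin n, A ℓ k * v ℓ : ℚ) : ℂ) := by
      intro k
      have h1 := hφ (fun ℓ => (v ℓ : ℂ)) k
      have h2 : Tmap n σ (fun ℓ => (v ℓ : ℂ)) k
          = ((Cq n σ v (tB n σ k + 1) : ℚ) : ℂ) - ((Cq n σ v (tA n σ k) : ℚ) : ℂ) := by
        show Avert n σ _ ((tB n σ k) + 2) - Avert n σ _ ((tA n σ k) + 1) = _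
        rw [show tB n σ k + 2 = (tB n σ k + 1) + 1 from rfl]
        rw [Avert_cast n σ v (tB n σ k + 1), Avert_cast n σ v (tA n σ k)]
      rw [h2] at h1
      push_cast [hA, Matrix.map_apply]
      exact h1
    constructor
    · intro hv k
      have h0 : (A.transpose.mulVecLin v) k = 0 := by rw [hv]; rfl
      have h0' : (∑ ℓ : Fin n, A ℓ k * v ℓ : ℚ) = 0 := by
        rw [← h0]
        simp [Matrix.mulVecLin_apply, Matrix.mulVec_transpose, Matrix.vecMul,
          dotProduct, mul_comm]
      have := hTm k
      rw [h0'] at this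
      push_cast at this
      have : Cq n σ v (tB n σ k + 1) - Cq n σ v (tA n σ k) = 0 := by exact_mod_cast this
      linarith
    · intro hv
      funext k
      have hz : Cq n σ v (tB n σ k + 1) - Cq n σ v (tA n σ k) = 0 := by rw [hv k]; ring
      have h3 : (∑ ℓ : Fin n, A ℓ k * v ℓ : ℚ) = 0 := by
        have := hTm k
        rw [hz] at this
        exact_mod_cast this.symm
      show (A.transpose.mulVec v) k = 0
      rw [← h3]
      simp [Matrix.mulVec_transpose, Matrix.vecMul, dotProduct, mul_comm]
  -- The submodule of functions constant on classes vanishing at 1.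
  let W : Submodule ℚ (ZMod (2 * n) → ℚ) :=
    { carrier := {f | (∀ x y, vertRel n σ x y → f x = f y) ∧ f 1 = 0}
      add_mem' := by
        rintro f g ⟨hf, hf1⟩ ⟨hg, hg1⟩
        exact ⟨fun x y h => by simp [hf x y h, hg x y h], by simp [hf1, hg1]⟩
      zero_mem' := ⟨fun _ _ _ => rfl, rfl⟩
      smul_mem' := by
        rintro a f ⟨hf, hf1⟩
        exact ⟨fun x y h => by simp [hf x y h], by simp [hf1]⟩ }
  -- kernel ≃ W
  have hmemK : ∀ v ∈ LinearMap.ker A.transpose.mulVecLin, PhiL n σ v ∈ W := by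
    intro v hv
    rw [LinearMap.mem_ker] at hv
    exact ⟨PhiL_rel hn v ((hK v).mp hv), PhiL_one hn v⟩
  have hmemW : ∀ f ∈ W, Gq n σ f ∈ LinearMap.ker A.transpose.mulVecLin := by
    rintro f ⟨hrel, h1⟩
    rw [LinearMap.mem_ker]
    exact (hK _).mpr (GL_mem hn f hrel h1)
  let e : (LinearMap.ker A.transpose.mulVecLin) ≃ₗ[ℚ] W :=
    LinearEquiv.ofLinear ((PhiL n σ).restrict hmemK) ((Gq n σ).restrict hmemW)
      (by
        apply LinearMap.ext
        rintro ⟨f, hf⟩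
        apply Subtype.ext
        exact PhiL_GL hn f hf.1 hf.2)
      (by
        apply LinearMap.ext
        rintro ⟨v, hv⟩
        apply Subtype.ext
        exact GL_PhiL hn v)
  -- W is the image of functions on the quotient vanishing at the class of 1.
  haveI : Finite (Quot (vertRel n σ)) := Finite.of_surjective _ Quot.mk_surjective
  haveI : Fintype (Quot (vertRel n σ)) := Fintype.ofFinite _
  let q0 : Quot (vertRel n σ) := Quot.mk _ 1
  let L : (Quot (vertRel n σ) → ℚ) →ₗ[ℚ] (ZMod (2 * n) → ℚ) :=
    LinearMap.funLeft ℚ ℚ (Quot.mk _)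
  let U : Submodule ℚ (Quot (vertRel n σ) → ℚ) := LinearMap.ker (LinearMap.proj q0)
  have hWU : W = U.map L := by
    ext f
    constructor
    · rintro ⟨hrel, h1⟩
      refine ⟨Quot.lift f hrel, ?_, rfl⟩
      simpa [U, LinearMap.mem_ker, q0] using h1
    · rintro ⟨g, hg, rfl⟩
      refine ⟨fun x y h => ?_, ?_⟩
      · show g (Quot.mk _ x) = g (Quot.mk _ y)
        exact congrArg g (Quot.sound h)
      · show g (Quot.mk _ 1) = 0
        simpa [U, LinearMap.mem_ker, q0] using hg
  have hLinj : Function.Injective L :=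
    LinearMap.funLeft_injective_of_surjective ℚ ℚ _ Quot.mk_surjective
  -- finrank computations
  have hfr1 : Module.finrank ℚ (LinearMap.ker A.transpose.mulVecLin) = Module.finrank ℚ U := by
    rw [e.finrank_eq]
    have : Module.finrank ℚ W = Module.finrank ℚ (U.map L) := by rw [hWU]
    rw [this, ← (Submodule.equivMapOfInjective L hLinj U).finrank_eq]
  have hcard : Nat.card (Quot (vertRel n σ)) = Fintype.card (Quot (vertRel n σ)) :=
    Nat.card_eq_fintype_card
  have hUrank : Module.finrank ℚ U + 1 = s := by
    have h4 := LinearMap.finrank_range_add_finrank_ker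
      (LinearMap.proj q0 : (Quot (vertRel n σ) → ℚ) →ₗ[ℚ] ℚ)
    have hsurj : LinearMap.range (LinearMap.proj q0 :
        (Quot (vertRel n σ) → ℚ) →ₗ[ℚ] ℚ) = ⊤ := by
      rw [LinearMap.range_eq_top]
      intro c
      exact ⟨fun _ => c, rfl⟩
    rw [hsurj] at h4
    rw [Module.finrank_fintype_fun_eq_card] at h4
    have htop : Module.finrank ℚ (⊤ : Submodule ℚ ℚ) = 1 := by
      rw [finrank_top, Module.finrank_self]
    rw [htop] at h4
    rw [hs, hcard]
    have hUeq : Module.finrank ℚ U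
        = Module.finrank ℚ (LinearMap.ker (LinearMap.proj q0 :
            (Quot (vertRel n σ) → ℚ) →ₗ[ℚ] ℚ)) := rfl
    rw [hUeq]
    omega
  have hrn := LinearMap.finrank_range_add_finrank_ker (A.transpose.mulVecLin)
  rw [Module.finrank_fintype_fun_eq_card, Fintype.card_fin] at hrn
  have hrank : A.rank = Module.finrank ℚ (LinearMap.range A.transpose.mulVecLin) := by
    rw [← Matrix.rank_transpose]
    rfl
  rw [hrank]
  omega
end
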